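/- Let n ≥ 1 and suppose M_k is invertible for every k ∈ ℤ. Set c_k^T := e_n^T M_k^{-1}, let Θ_k be the (invertible) matrix whose i-th row is c_{k+i}^T A_{k+i-1} ⋯ A_k, let Ā_k := Θ_{k+1} A_k Θ_k^{-1}, and define a_{i,k} := −(Ā_k)_{n-1,i} (the negatives of the last-row entries of Ā_k). Then for every solution (x, u) and y_k := c_k^T x_k, the input is parameterized as u_k = y_{k+n} + Σ_{i=0}^{n-1} a_{i,k} y_{k+i} for every k ∈ ℤ. -/
import Mathlib

open Matrix BigOperators

noncomputable section

/-- `Pmat n A k j = A (k-1) * A (k-2) * ⋯ * A (k-j)` (product of `j` factors, `Pmat n A k 0 = 1`). -/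
def Pmat (n : ℕ) (A : ℤ → Matrix (Fin n) (Fin n) ℝ) (k : ℤ) : ℕ → Matrix (Fin n) (Fin n) ℝ
  | 0 => 1
  | j + 1 => Pmat n A k j * A (k - ((j : ℤ) + 1))

/-- The matrix `M_k` whose `j`-th column is `P_k^{(j)} b_{k-1-j}`. -/
def Mmat (n : ℕ) (A : ℤ → Matrix (Fin n) (Fin n) ℝ) (b : ℤ → Fin n → ℝ) (k : ℤ) :
    Matrix (Fin n) (Fin n) ℝ :=
  Matrix.of fun i j => (Pmat n A k (j : ℕ) *ᵥ b (k - 1 - ((j : ℕ) : ℤ))) i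

/-- The last standard basis vector `e_n` of `ℝ^n`. -/
def elast (n : ℕ) : Fin n → ℝ := fun i => if (i : ℕ) = n - 1 then 1 else 0

/-- The row vector `c_k^T := e_n^T M_k^{-1}`. -/
def cvec (n : ℕ) (A : ℤ → Matrix (Fin n) (Fin n) ℝ) (b : ℤ → Fin n → ℝ) (k : ℤ) :
    Fin n → ℝ :=
  elast n ᵥ* (Mmat n A b k)⁻¹

/-- The matrix `Θ_k` whose `i`-th row is `c_{k+i}^T A_{k+i-1} ⋯ A_k`. -/
def Theta (n : ℕ) (A : ℤ → Matrix (Fin n) (Fin n) ℝ) (b : ℤ → Fin n → ℝ) (k : ℤ) :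
    Matrix (Fin n) (Fin n) ℝ :=
  Matrix.of fun i j => (cvec n A b (k + (i : ℕ)) ᵥ* Pmat n A (k + (i : ℕ)) (i : ℕ)) j

/-- The transformed dynamics matrix `Ā_k := Θ_{k+1} A_k Θ_k^{-1}`. -/
def Abar (n : ℕ) (A : ℤ → Matrix (Fin n) (Fin n) ℝ) (b : ℤ → Fin n → ℝ) (k : ℤ) :
    Matrix (Fin n) (Fin n) ℝ :=
  Theta n A b (k + 1) * A k * (Theta n A b k)⁻¹

-- Auxiliary lemmas

lemma Pmat_succ_left (n : ℕ) (A : ℤ → Matrix (Fin n) (Fin n) ℝ) (m : ℤ) (j : ℕ) :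
    Pmat n A (m + 1) (j + 1) = A m * Pmat n A m j := by
  induction j with
  | zero => simp [Pmat]
  | succ j ih =>
      show Pmat n A (m+1) (j+1) * _ = _
      rw [ih]
      show A m * Pmat n A m j * A (m + 1 - ((j:ℤ) + 1 + 1)) = A m * (Pmat n A m j * A (m - ((j:ℤ)+1)))
      rw [Matrix.mul_assoc]
      ring_nf

lemma Pmat_add (n : ℕ) (A : ℤ → Matrix (Fin n) (Fin n) ℝ) (m : ℤ) (i j : ℕ) :
    Pmat n A m i * Pmat n A (m - i) j = Pmat n A m (i + j) := by
  induction j with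
  | zero => simp [Pmat]
  | succ j ih =>
      rw [show i + (j+1) = (i+j)+1 by ring]
      show Pmat n A m i * (Pmat n A (m - i) j * A (m - (i:ℤ) - ((j:ℤ)+1)))
          = Pmat n A m (i+j) * A (m - (((i+j:ℕ):ℤ) + 1))
      rw [← Matrix.mul_assoc, ih]
      congr 2
      push_cast
      ring

lemma keyA (n : ℕ) (A : ℤ → Matrix (Fin n) (Fin n) ℝ) (b : ℤ → Fin n → ℝ)
    (hM : ∀ k : ℤ, IsUnit (Mmat n A b k)) (m : ℤ) (e : ℕ) (he : e < n) :
    (cvec n A b m ᵥ* Pmat n A m e) ⬝ᵥ b (m - 1 - (e : ℤ)) = if e = n - 1 then 1 else 0 := by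
  have hcM : cvec n A b m ᵥ* Mmat n A b m = elast n := by
    rw [cvec, Matrix.vecMul_vecMul, Matrix.nonsing_inv_mul _ ((Matrix.isUnit_iff_isUnit_det _).1 (hM m)),
      Matrix.vecMul_one]
  have h1 : (cvec n A b m ᵥ* Mmat n A b m) ⟨e, he⟩ = elast n ⟨e, he⟩ := by rw [hcM]
  rw [← Matrix.dotProduct_mulVec]
  have h2 : (cvec n A b m ᵥ* Mmat n A b m) ⟨e, he⟩
      = cvec n A b m ⬝ᵥ (Pmat n A m e *ᵥ b (m - 1 - (e : ℤ))) := by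
    simp [Matrix.vecMul, dotProduct, Mmat]
  rw [h2] at h1
  rw [h1]
  simp [elast]


lemma dotProduct_finsum {ι : Type*} {n : ℕ} (v : Fin n → ℝ) (s : Finset ι) (f : ι → Fin n → ℝ) :
    v ⬝ᵥ (∑ j ∈ s, f j) = ∑ j ∈ s, v ⬝ᵥ f j := by
  simp only [dotProduct, Finset.sum_apply, Finset.mul_sum]
  exact Finset.sum_comm

lemma theta_isUnit (n : ℕ) (A : ℤ → Matrix (Fin n) (Fin n) ℝ) (b : ℤ → Fin n → ℝ)
    (hM : ∀ k : ℤ, IsUnit (Mmat n A b k)) (k : ℤ) : IsUnit (Theta n A b k) := by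
  set T := Theta n A b k with hT
  set M := Mmat n A b k with hMk
  have hTM : ∀ i j : Fin n, (i : ℕ) + (j : ℕ) < n →
      (T * M) i j = if (i : ℕ) + (j : ℕ) = n - 1 then 1 else 0 := by
    intro i j h
    have h1 : (T * M) i j = (cvec n A b (k + (i : ℕ)) ᵥ* Pmat n A (k + (i : ℕ)) (i : ℕ)) ⬝ᵥ
        (Pmat n A k (j : ℕ) *ᵥ b (k - 1 - ((j : ℕ) : ℤ))) := by
      simp [hT, hMk, Matrix.mul_apply, Theta, Mmat, dotProduct]
    rw [h1, Matrix.dotProduct_mulVec, Matrix.vecMul_vecMul]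
    have h2 := Pmat_add n A (k + (i : ℕ)) (i : ℕ) (j : ℕ)
    rw [show (k + ((i : ℕ) : ℤ)) - ((i : ℕ) : ℤ) = k by ring] at h2
    rw [h2]
    have h3 := keyA n A b hM (k + (i : ℕ)) ((i : ℕ) + (j : ℕ)) h
    rw [show (k + ((i : ℕ) : ℤ)) - 1 - (((i : ℕ) + (j : ℕ) : ℕ) : ℤ) = k - 1 - ((j : ℕ) : ℤ) by
      push_cast; ring] at h3
    exact h3
  set N := (T * M).submatrix (⇑(Fin.revPerm : Equiv.Perm (Fin n))) id with hN
  have hrev : ∀ i : Fin n, ((Fin.rev i : Fin n) : ℕ) = n - 1 - (i : ℕ) := by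
    intro i; rw [Fin.val_rev]; omega
  have hNtri : N.BlockTriangular id := by
    intro i j hji
    simp only [id] at hji
    have hNij : N i j = (T * M) (Fin.rev i) j := by simp [hN]
    rw [hNij, hTM _ _ (by rw [hrev]; omega), if_neg (by rw [hrev]; omega)]
  have hdiag : ∀ i : Fin n, N i i = 1 := by
    intro i
    have hNij : N i i = (T * M) (Fin.rev i) i := by simp [hN]
    rw [hNij, hTM _ _ (by rw [hrev]; omega), if_pos (by rw [hrev]; omega)]
  have hdetN : N.det = 1 := by
    rw [Matrix.det_of_upperTriangular hNtri]
    simp [hdiag]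
  have hsgn : ((Equiv.Perm.sign (Fin.revPerm : Equiv.Perm (Fin n)) : ℤ) : ℝ) * (T * M).det = 1 := by
    rw [← Matrix.det_permute]; exact hdetN
  have hdet2 : T.det * M.det ≠ 0 := by
    rw [← Matrix.det_mul]
    intro h0
    rw [h0, mul_zero] at hsgn
    norm_num at hsgn
  exact (Matrix.isUnit_iff_isUnit_det T).2 (isUnit_iff_ne_zero.2 (fun h => hdet2 (by rw [h, zero_mul])))

lemma stateForm (n : ℕ) (A : ℤ → Matrix (Fin n) (Fin n) ℝ) (b : ℤ → Fin n → ℝ)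
    (x : ℤ → Fin n → ℝ) (u : ℤ → ℝ)
    (hsol : ∀ k : ℤ, x (k + 1) = A k *ᵥ x k + u k • b k) (k : ℤ) : ∀ i : ℕ,
    x (k + (i : ℤ)) = Pmat n A (k + (i : ℤ)) i *ᵥ x k +
      ∑ j ∈ Finset.range i, u (k + (j : ℤ)) • (Pmat n A (k + (i : ℤ)) (i - 1 - j) *ᵥ b (k + (j : ℤ))) := by
  intro i
  induction i with
  | zero => simp [Pmat, Matrix.one_mulVec]
  | succ i ih =>
      have hx : x (k + ((i : ℤ) + 1)) = A (k + (i : ℤ)) *ᵥ x (k + (i : ℤ)) + u (k + (i : ℤ)) • b (k + (i : ℤ)) := by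
        have := hsol (k + (i : ℤ))
        rwa [show (k + (i : ℤ)) + 1 = k + ((i : ℤ) + 1) by ring] at this
      have hcast : (((i : ℕ) + 1 : ℕ) : ℤ) = (i : ℤ) + 1 := by push_cast; ring
      rw [hcast, hx, ih, show k + ((i : ℤ) + 1) = k + (i : ℤ) + 1 by ring, Matrix.mulVec_add,
        Matrix.mulVec_mulVec]
      have hsum : A (k + (i : ℤ)) *ᵥ (∑ j ∈ Finset.range i,
            u (k + (j : ℤ)) • (Pmat n A (k + (i : ℤ)) (i - 1 - j) *ᵥ b (k + (j : ℤ))))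
          = ∑ j ∈ Finset.range i, u (k + (j : ℤ)) •
              ((A (k + (i : ℤ)) * Pmat n A (k + (i : ℤ)) (i - 1 - j)) *ᵥ b (k + (j : ℤ))) := by
        rw [← Matrix.mulVecLin_apply, map_sum]
        refine Finset.sum_congr rfl (fun j _ => ?_)
        simp [Matrix.mulVecLin_apply, Matrix.mulVec_smul, Matrix.mulVec_mulVec]
      rw [hsum, Finset.sum_range_succ]
      have hPx : A (k + (i : ℤ)) * Pmat n A (k + (i : ℤ)) i = Pmat n A (k + (i : ℤ) + 1) (i + 1) :=
        (Pmat_succ_left n A (k + (i : ℤ)) i).symm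
      rw [hPx]
      have hlast : Pmat n A (k + (i : ℤ) + 1) (i + 1 - 1 - i) = 1 := by
        simp [Pmat]
      rw [hlast, Matrix.one_mulVec]
      have hterms : ∀ j ∈ Finset.range i,
          u (k + (j : ℤ)) • ((A (k + (i : ℤ)) * Pmat n A (k + (i : ℤ)) (i - 1 - j)) *ᵥ b (k + (j : ℤ)))
          = u (k + (j : ℤ)) • (Pmat n A (k + (i : ℤ) + 1) (i + 1 - 1 - j) *ᵥ b (k + (j : ℤ))) := by
        intro j hj
        rw [Finset.mem_range] at hj
        have : (i : ℕ) + 1 - 1 - j = (i - 1 - j) + 1 := by omega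
        rw [this, Pmat_succ_left]
      rw [Finset.sum_congr rfl hterms]
      abel

lemma outForm (n : ℕ) (A : ℤ → Matrix (Fin n) (Fin n) ℝ) (b : ℤ → Fin n → ℝ)
    (hM : ∀ k : ℤ, IsUnit (Mmat n A b k))
    (x : ℤ → Fin n → ℝ) (u : ℤ → ℝ)
    (hsol : ∀ k : ℤ, x (k + 1) = A k *ᵥ x k + u k • b k) (k : ℤ) (i : ℕ) (hi : i < n) :
    (cvec n A b (k + (i : ℤ)) ᵥ* Pmat n A (k + (i : ℤ)) i) ⬝ᵥ x k
      = cvec n A b (k + (i : ℤ)) ⬝ᵥ x (k + (i : ℤ)) := by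
  rw [stateForm n A b x u hsol k i, dotProduct_add, dotProduct_finsum, Matrix.dotProduct_mulVec]
  have hz : ∀ j ∈ Finset.range i,
      cvec n A b (k + (i : ℤ)) ⬝ᵥ (u (k + (j : ℤ)) • (Pmat n A (k + (i : ℤ)) (i - 1 - j) *ᵥ b (k + (j : ℤ)))) = 0 := by
    intro j hj
    rw [Finset.mem_range] at hj
    rw [dotProduct_smul, Matrix.dotProduct_mulVec]
    have h3 := keyA n A b hM (k + (i : ℤ)) (i - 1 - j) (by omega)
    rw [show (k + (i : ℤ)) - 1 - ((i - 1 - j : ℕ) : ℤ) = k + (j : ℤ) by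
      rw [Nat.cast_sub (by omega), Nat.cast_sub (by omega)]; push_cast; ring] at h3
    rw [h3, if_neg (by omega)]
    simp
  rw [Finset.sum_congr rfl hz]
  simp

/-- with `a_{i,k} := -(Ā_k)_{n-1,i}` (negatives of the last-row entries of
`Ā_k := Θ_{k+1} A_k Θ_k⁻¹`), for every solution `(x, u)` and `y_k := c_k^T x_k` the input
is parameterized as `u_k = y_{k+n} + Σ_{i=0}^{n-1} a_{i,k} y_{k+i}` for every `k`. -/
theorem stmt7 (n : ℕ) (hn : 1 ≤ n)
    (A : ℤ → Matrix (Fin n) (Fin n) ℝ) (b : ℤ → Fin n → ℝ)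
    (hM : ∀ k : ℤ, IsUnit (Mmat n A b k))
    (x : ℤ → Fin n → ℝ) (u : ℤ → ℝ)
    (hsol : ∀ k : ℤ, x (k + 1) = A k *ᵥ x k + u k • b k) :
    ∀ k : ℤ,
      u k = cvec n A b (k + n) ⬝ᵥ x (k + n) +
        ∑ i : Fin n,
          (-(Abar n A b k (⟨n - 1, by omega⟩ : Fin n) i)) *
            (cvec n A b (k + (i : ℕ)) ⬝ᵥ x (k + (i : ℕ))) := by
  intro k
  set p : Fin n := (⟨n - 1, by omega⟩ : Fin n) with hp
  have hT := theta_isUnit n A b hM k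
  have key1 : Theta n A b (k + 1) * A k = Abar n A b k * Theta n A b k := by
    rw [Abar, Matrix.mul_assoc (Theta n A b (k+1) * A k),
      Matrix.nonsing_inv_mul _ ((Matrix.isUnit_iff_isUnit_det _).1 hT), Matrix.mul_one]
  have hb1 : Theta n A b (k + 1) *ᵥ b k = elast n := by
    funext i
    have h1 : (Theta n A b (k + 1) *ᵥ b k) i
        = (cvec n A b (k + 1 + ((i : ℕ) : ℤ)) ᵥ* Pmat n A (k + 1 + ((i : ℕ) : ℤ)) (i : ℕ)) ⬝ᵥ b k := by
      simp [Matrix.mulVec, Theta, dotProduct]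
    rw [h1]
    have h3 := keyA n A b hM (k + 1 + ((i : ℕ) : ℤ)) (i : ℕ) i.isLt
    rw [show (k + 1 + ((i : ℕ) : ℤ)) - 1 - ((i : ℕ) : ℤ) = k by ring] at h3
    rw [h3]
    simp [elast]
  have eq1 : Theta n A b (k + 1) *ᵥ x (k + 1)
      = Abar n A b k *ᵥ (Theta n A b k *ᵥ x k) + u k • elast n := by
    rw [hsol k, Matrix.mulVec_add, Matrix.mulVec_smul, Matrix.mulVec_mulVec, key1,
      ← Matrix.mulVec_mulVec, hb1]
  have eq2 := congrFun eq1 p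
  -- LHS computation
  have hL : (Theta n A b (k + 1) *ᵥ x (k + 1)) p = cvec n A b (k + n) ⬝ᵥ x (k + n) := by
    have h1 : (Theta n A b (k + 1) *ᵥ x (k + 1)) p
        = (cvec n A b (k + 1 + ((n - 1 : ℕ) : ℤ)) ᵥ* Pmat n A (k + 1 + ((n - 1 : ℕ) : ℤ)) (n - 1)) ⬝ᵥ x (k + 1) := by
      simp [Matrix.mulVec, Theta, dotProduct, hp]
    rw [h1, outForm n A b hM x u hsol (k + 1) (n - 1) (by omega),
      show k + 1 + ((n - 1 : ℕ) : ℤ) = k + (n : ℤ) by rw [Nat.cast_sub hn]; push_cast; ring]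
  -- z entries
  have hz : ∀ i : Fin n, (Theta n A b k *ᵥ x k) i = cvec n A b (k + ((i : ℕ) : ℤ)) ⬝ᵥ x (k + ((i : ℕ) : ℤ)) := by
    intro i
    have h1 : (Theta n A b k *ᵥ x k) i
        = (cvec n A b (k + ((i : ℕ) : ℤ)) ᵥ* Pmat n A (k + ((i : ℕ) : ℤ)) (i : ℕ)) ⬝ᵥ x k := by
      simp [Matrix.mulVec, Theta, dotProduct]
    rw [h1, outForm n A b hM x u hsol k (i : ℕ) i.isLt]
  have hR : (Abar n A b k *ᵥ (Theta n A b k *ᵥ x k) + u k • elast n) p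
      = (∑ i : Fin n, Abar n A b k p i * (cvec n A b (k + ((i : ℕ) : ℤ)) ⬝ᵥ x (k + ((i : ℕ) : ℤ)))) + u k := by
    have helast : elast n p = 1 := by simp [elast, hp]
    simp only [Pi.add_apply, Pi.smul_apply, helast, smul_eq_mul, mul_one]
    congr 1
    have hmv : (Abar n A b k *ᵥ (Theta n A b k *ᵥ x k)) p
        = ∑ i : Fin n, Abar n A b k p i * (Theta n A b k *ᵥ x k) i := by
      simp [Matrix.mulVec, dotProduct]
    rw [hmv]
    exact Finset.sum_congr rfl (fun i _ => by rw [hz i])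
  rw [hL, hR] at eq2
  have hneg : ∑ i : Fin n, (-(Abar n A b k p i)) * (cvec n A b (k + ((i : ℕ) : ℤ)) ⬝ᵥ x (k + ((i : ℕ) : ℤ)))
      = -∑ i : Fin n, Abar n A b k p i * (cvec n A b (k + ((i : ℕ) : ℤ)) ⬝ᵥ x (k + ((i : ℕ) : ℤ))) := by
    simp [neg_mul, Finset.sum_neg_distrib]
  rw [hneg, eq2]
  ring
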